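/- For every integer n ≥ 2, the polynomial R_n(x) is divisible by (x+1)^{⌊n/2⌋−1} in ℤ[x]. -/

import Mathlib

open Polynomial Finset

/-- The value (in `{0,…,n-1}`) of the permutation `π` at the 0-indexed position `j`
(junk value `0` outside the range). -/
def permVal {n : ℕ} (π : Equiv.Perm (Fin n)) (j : ℕ) : ℕ :=
  if h : j < n then ((π ⟨j, h⟩ : Fin n) : ℕ) else 0

/-- `π` changes direction at the 0-indexed position `i`
(i.e. at the 1-indexed position `i+1`). -/
def changesDir {n : ℕ} (π : Equiv.Perm (Fin n)) (i : ℕ) : Prop :=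
  (permVal π (i - 1) < permVal π i ∧ permVal π (i + 1) < permVal π i) ∨
  (permVal π i < permVal π (i - 1) ∧ permVal π i < permVal π (i + 1))

instance {n : ℕ} (π : Equiv.Perm (Fin n)) (i : ℕ) : Decidable (changesDir π i) := by
  unfold changesDir; infer_instance

/-- The number of alternating runs of `π ∈ S_n`: one more than the number of
1-indexed positions `i ∈ {2,…,n-1}` (0-indexed `i ∈ {1,…,n-2}`) where `π` changes direction. -/
def altRuns (n : ℕ) (π : Equiv.Perm (Fin n)) : ℕ :=
  1 + ((Finset.Ioo 0 (n - 1)).filter (fun i => changesDir π i)).card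

/-- The alternating run polynomial `R_n(x) = Σ_k R(n,k) x^k`, over `ℤ`. -/
noncomputable def Rpoly (n : ℕ) : Polynomial ℤ :=
  ∑ π : Equiv.Perm (Fin n), Polynomial.X ^ altRuns n π

/-! Inserting the new maximum into a permutation of `[m]` with `k` alternating runs, at each of its
`m + 1` slots, keeps `k` runs for `k` slots, adds one run for two slots and adds two runs for the
remaining `m - 1 - k` slots. Summing gives `R_{m+1} = x (1 - x²) R_m' + (2x + (m - 1) x²) R_m`.
Writing `R_m = (x + 1)^k Q`, the right-hand side is `(x + 1)^k` times a polynomial whose value at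
`-1` is `(m - 3 - 2k) Q(-1)`, so the power of `x + 1` goes up every second step. -/

section RunsOperator

variable {R : Type*} [CommRing R]

noncomputable def runsOperator (c P : R[X]) : R[X] :=
  X * (1 - X ^ 2) * derivative P + (2 * X + c * X ^ 2) * P

lemma X_mul_derivative_X_pow (k : ℕ) :
    X * derivative (X ^ k : R[X]) = (k : R[X]) * X ^ k := by
  cases k with
  | zero => simp
  | succ k =>
    rw [derivative_X_pow_succ, map_add, map_one, C_eq_natCast, Nat.cast_succ, pow_succ]
    ring

lemma X_add_one_mul_derivative_pow (k : ℕ) :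
    (X + 1) * derivative ((X + 1) ^ k : R[X]) = (k : R[X]) * (X + 1) ^ k := by
  cases k with
  | zero => simp
  | succ k =>
    rw [derivative_pow, Nat.add_sub_cancel, derivative_add, derivative_X, derivative_one,
      C_eq_natCast, Nat.cast_succ, pow_succ]
    ring

lemma X_add_one_pow_dvd_runsOperator {P : R[X]} {k : ℕ} (c : R[X]) (h : (X + 1) ^ k ∣ P) :
    (X + 1) ^ k ∣ runsOperator c P := by
  obtain ⟨Q, rfl⟩ := h
  refine ⟨X * (1 - X) * ((k : R[X]) * Q + (X + 1) * derivative Q) + (2 * X + c * X ^ 2) * Q, ?_⟩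
  rw [runsOperator, derivative_mul]
  linear_combination X * (1 - X) * Q * X_add_one_mul_derivative_pow (R := R) k

lemma X_add_one_pow_succ_dvd_runsOperator {P : R[X]} {k : ℕ} (h : (X + 1) ^ k ∣ P) :
    (X + 1) ^ (k + 1) ∣ runsOperator (2 * (k : R[X]) + 2) P := by
  obtain ⟨Q, rfl⟩ := h
  refine ⟨X * (((k : R[X]) + 2) * Q + (1 - X) * derivative Q), ?_⟩
  rw [runsOperator, derivative_mul]
  linear_combination X * (1 - X) * Q * X_add_one_mul_derivative_pow (R := R) k

end RunsOperator

def numChanges (W : ℕ → Bool) (k : ℕ) : ℕ :=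
  #{i ∈ range k | W i ≠ W (i + 1)}

/-- The ascent word after a new maximum is inserted at slot `q`: the letter `W (q - 1)` becomes
the peak `true, false`; for `q = 0` only `false` is prepended, past the end only `true` appended. -/
def insertPeak (W : ℕ → Bool) (q i : ℕ) : Bool :=
  if i + 1 < q then W i else if i + 1 = q then true else if i = q then false else W (i - 1)

section Words

variable (W : ℕ → Bool)

lemma numChanges_succ (k : ℕ) :
    numChanges W (k + 1) = numChanges W k + if W k = W (k + 1) then 0 else 1 := by
  unfold numChanges
  rw [range_add_one, filter_insert]
  split_ifs <;> first | contradiction | simp_all [card_insert_of_notMem]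

lemma numChanges_congr {V : ℕ → Bool} {k : ℕ} (h : ∀ i ≤ k, W i = V i) :
    numChanges W k = numChanges V k := by
  unfold numChanges
  congr 1
  refine filter_congr fun i hi => ?_
  rw [h i (by simp at hi; omega), h (i + 1) (by simp at hi; omega)]

variable {W}

lemma insertPeak_of_lt {q i : ℕ} (h : i + 1 < q) : insertPeak W q i = W i := by
  simp [insertPeak, h]

lemma insertPeak_of_succ_eq {q i : ℕ} (h : i + 1 = q) : insertPeak W q i = true := by
  simp [insertPeak, h]

lemma insertPeak_self (q : ℕ) : insertPeak W q q = false := by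
  simp [insertPeak]

lemma insertPeak_of_gt {q i : ℕ} (h : q < i) : insertPeak W q i = W (i - 1) := by
  simp [insertPeak, show ¬ i + 1 < q by omega, show i + 1 ≠ q by omega, h.ne']

variable (W)

lemma numChanges_insertPeak_of_le {q L : ℕ} (hq : q ≤ L) :
    numChanges (insertPeak W q) (L + 2) =
      numChanges (insertPeak W q) (L + 1) + if W L = W (L + 1) then 0 else 1 := by
  rw [numChanges_succ, insertPeak_of_gt (by omega), insertPeak_of_gt (by omega)]
  rfl

lemma numChanges_insertPeak_add_two (k : ℕ) :
    numChanges (insertPeak W (k + 2)) (k + 1) = numChanges W k + if W k = true then 0 else 1 := by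
  rw [numChanges_succ, insertPeak_of_lt (by omega), insertPeak_of_succ_eq rfl,
    numChanges_congr _ fun i hi => insertPeak_of_lt (by omega)]

lemma numChanges_insertPeak_add_one {k : ℕ} (hk : W k = true) :
    numChanges (insertPeak W (k + 1)) (k + 1) = numChanges W k + 1 := by
  rw [numChanges_succ, insertPeak_of_succ_eq rfl, insertPeak_self, if_neg Bool.true_eq_false.mp]
  congr 1
  refine numChanges_congr _ fun i hi => ?_
  rcases hi.lt_or_eq with hi | rfl
  · exact insertPeak_of_lt (by omega)
  · rw [insertPeak_of_succ_eq rfl, hk]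

theorem sum_X_pow_numChanges_insertPeak {R : Type*} [CommRing R] (L : ℕ) :
    ∑ q ∈ range (L + 3), (X : R[X]) ^ numChanges (insertPeak W q) (L + 1) =
      X ^ numChanges W L * ((numChanges W L : R[X]) + 1 + 2 * X +
        ((L : R[X]) - (numChanges W L : R[X])) * X ^ 2) := by
  induction L with
  | zero =>
    simp only [sum_range_succ, range_zero, sum_empty, numChanges_succ, insertPeak]
    cases W 0 <;> norm_num [numChanges] <;> ring
  | succ L ih =>
    -- Appending a letter multiplies the contribution of every slot `q ≤ L` by the same factor.
    rw [sum_range_succ, sum_range_succ] at ih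
    have hlow : ∑ q ∈ range (L + 1), (X : R[X]) ^ numChanges (insertPeak W q) (L + 2) =
        X ^ (if W L = W (L + 1) then 0 else 1) *
          ∑ q ∈ range (L + 1), (X : R[X]) ^ numChanges (insertPeak W q) (L + 1) := by
      rw [mul_sum]
      refine sum_congr rfl fun q hq => ?_
      rw [numChanges_insertPeak_of_le W (by simpa [Nat.lt_succ_iff] using hq), pow_add, mul_comm]
    have h1 : numChanges (insertPeak W (L + 1)) (L + 2) =
        numChanges (insertPeak W (L + 1)) (L + 1) + if false = W (L + 1) then 0 else 1 := by
      rw [numChanges_succ, insertPeak_self, insertPeak_of_gt (by omega)]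
      rfl
    have h2 : numChanges (insertPeak W (L + 2)) (L + 2) =
        numChanges (insertPeak W (L + 2)) (L + 1) + 1 := by
      rw [numChanges_succ, insertPeak_of_succ_eq rfl, insertPeak_self]
      rfl
    rw [show L + 1 + 3 = L + 1 + 1 + 1 + 1 from rfl, sum_range_succ, sum_range_succ,
      sum_range_succ, hlow, eq_sub_of_add_eq (eq_sub_of_add_eq ih), h1, h2,
      numChanges_insertPeak_add_two, numChanges_insertPeak_add_two, numChanges_succ W L]
    cases hB : W L
    · cases W (L + 1) <;>
        simp only [Bool.false_eq_true, ↓reduceIte, pow_zero, pow_one, one_mul, add_zero,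
          Nat.cast_add, Nat.cast_one] <;> ring
    · rw [numChanges_insertPeak_add_one W hB]
      cases W (L + 1) <;>
        simp only [Bool.false_eq_true, Bool.true_eq_false, ↓reduceIte, pow_zero, pow_one, one_mul,
          add_zero, Nat.cast_add, Nat.cast_one] <;> ring

end Words

def ascentWord {n : ℕ} (π : Equiv.Perm (Fin n)) (i : ℕ) : Bool :=
  decide (permVal π i < permVal π (i + 1))

lemma permVal_lt {n : ℕ} (π : Equiv.Perm (Fin n)) {j : ℕ} (h : j < n) : permVal π j < n := by
  simp [permVal, h]

lemma permVal_injOn {n : ℕ} (π : Equiv.Perm (Fin n)) : Set.InjOn (permVal π) (Set.Iio n) := by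
  intro j (h : j < n) j' (h' : j' < n) hjj'
  simpa [permVal, h, h', Fin.val_inj] using hjj'

def insertMax {m : ℕ} (σ : Equiv.Perm (Fin m)) (p : Fin (m + 1)) : Equiv.Perm (Fin (m + 1)) :=
  (finSuccEquiv' p).trans ((Equiv.optionCongr σ).trans finSuccEquivLast.symm)

section Permutations

variable {m : ℕ} (σ : Equiv.Perm (Fin m)) (p : Fin (m + 1))

lemma insertMax_apply_self : insertMax σ p p = Fin.last m := by
  simp [insertMax, finSuccEquiv'_at]

lemma insertMax_apply_succAbove (j : Fin m) :
    insertMax σ p (p.succAbove j) = (σ j).castSucc := by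
  simp [insertMax, finSuccEquiv'_succAbove, finSuccEquivLast_symm_some]

lemma permVal_insertMax_of_lt {j : ℕ} (hj : j < p) :
    permVal (insertMax σ p) j = permVal σ j := by
  have hjm : j < m := by omega
  have hpos : (⟨j, by omega⟩ : Fin (m + 1)) = p.succAbove ⟨j, hjm⟩ :=
    (Fin.succAbove_of_castSucc_lt p ⟨j, hjm⟩ (by simpa [Fin.lt_def] using hj)).symm
  simp only [permVal, dif_pos hjm, dif_pos (show j < m + 1 by omega), hpos,
    insertMax_apply_succAbove, Fin.val_castSucc]

lemma permVal_insertMax_self : permVal (insertMax σ p) p = m := by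
  simp [permVal, p.isLt, insertMax_apply_self]

lemma permVal_insertMax_of_gt {j : ℕ} (hj : p < j) (hjm : j ≤ m) :
    permVal (insertMax σ p) j = permVal σ (j - 1) := by
  have hpos : (⟨j, by omega⟩ : Fin (m + 1)) = p.succAbove ⟨j - 1, by omega⟩ := by
    rw [Fin.succAbove_of_le_castSucc _ _ (by simp [Fin.le_iff_val_le_val]; omega)]
    ext; simp; omega
  simp only [permVal, dif_pos (show j - 1 < m by omega), dif_pos (show j < m + 1 by omega), hpos,
    insertMax_apply_succAbove, Fin.val_castSucc]

lemma ascentWord_insertMax {i : ℕ} (hi : i < m) :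
    ascentWord (insertMax σ p) i = insertPeak (ascentWord σ) p i := by
  unfold ascentWord insertPeak
  rcases lt_trichotomy (i + 1) p with h | h | h
  · rw [if_pos h, permVal_insertMax_of_lt σ p (by omega), permVal_insertMax_of_lt σ p h]
  · rw [if_neg h.not_lt, if_pos h, permVal_insertMax_of_lt σ p (by omega), h,
      permVal_insertMax_self]
    simpa using permVal_lt σ hi
  · rw [if_neg (by omega), if_neg h.ne']
    rcases (Nat.lt_succ_iff.mp h).eq_or_lt with rfl | h'
    · rw [if_pos rfl, permVal_insertMax_self, permVal_insertMax_of_gt σ p (by omega) (by omega)]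
      simpa using (permVal_lt σ hi).le
    · rw [if_neg h'.ne', permVal_insertMax_of_gt σ p h' (by omega),
        permVal_insertMax_of_gt σ p (by omega) (by omega), show i + 1 - 1 = i - 1 + 1 by omega]

lemma insertMax_injective :
    Function.Injective fun x : Equiv.Perm (Fin m) × Fin (m + 1) => insertMax x.1 x.2 := by
  rintro ⟨σ, p⟩ ⟨τ, q⟩ h
  simp only at h
  obtain rfl : p = q := by
    rw [← (insertMax σ p).symm_apply_apply p, ← (insertMax τ q).symm_apply_apply q,
      insertMax_apply_self, insertMax_apply_self, h]
  have hστ : σ = τ := Equiv.ext fun j => Fin.castSucc_injective m <| by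
    rw [← insertMax_apply_succAbove, ← insertMax_apply_succAbove, h]
  rw [hστ]

lemma insertMax_bijective :
    Function.Bijective fun x : Equiv.Perm (Fin m) × Fin (m + 1) => insertMax x.1 x.2 := by
  rw [Fintype.bijective_iff_injective_and_card]
  refine ⟨insertMax_injective, ?_⟩
  simp [Fintype.card_perm, Nat.factorial_succ, mul_comm]

end Permutations

lemma changesDir_succ_iff {n : ℕ} (π : Equiv.Perm (Fin n)) {j : ℕ} (hj : j + 2 < n) :
    changesDir π (j + 1) ↔ ascentWord π j ≠ ascentWord π (j + 1) := by
  have h₁ : permVal π j ≠ permVal π (j + 1) :=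
    (permVal_injOn π).ne (show j < n by omega) (show j + 1 < n by omega) (by omega)
  have h₂ : permVal π (j + 1) ≠ permVal π (j + 2) :=
    (permVal_injOn π).ne (show j + 1 < n by omega) (show j + 2 < n by omega) (by omega)
  unfold changesDir ascentWord
  rw [Nat.add_sub_cancel]
  rcases h₁.lt_or_gt with h₁ | h₁ <;> rcases h₂.lt_or_gt with h₂ | h₂ <;>
    simp [h₁, h₂, h₁.not_gt, h₂.not_gt]

lemma altRuns_eq (L : ℕ) (π : Equiv.Perm (Fin (L + 2))) :
    altRuns (L + 2) π = 1 + numChanges (ascentWord π) L := by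
  unfold altRuns numChanges
  congr 1
  refine card_nbij' (· - 1) (· + 1) ?_ ?_ ?_ ?_
  · intro i hi
    simp only [coe_filter, mem_Ioo, Set.mem_ofPred_eq, mem_range] at hi ⊢
    obtain ⟨j, rfl⟩ : ∃ j, i = j + 1 := ⟨i - 1, by omega⟩
    exact ⟨by omega, (changesDir_succ_iff π (by omega)).mp hi.2⟩
  · intro j hj
    simp only [coe_filter, mem_Ioo, Set.mem_ofPred_eq, mem_range] at hj ⊢
    exact ⟨by omega, (changesDir_succ_iff π (by omega)).mpr hj.2⟩
  · intro i hi
    simp only [coe_filter, mem_Ioo, Set.mem_ofPred_eq] at hi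
    show i - 1 + 1 = i
    omega
  · intro j _
    simp

theorem sum_X_pow_altRuns_insertMax (L : ℕ) (σ : Equiv.Perm (Fin (L + 2))) :
    ∑ p : Fin (L + 3), (X : ℤ[X]) ^ altRuns (L + 3) (insertMax σ p) =
      X ^ altRuns (L + 2) σ *
        ((altRuns (L + 2) σ : ℤ[X]) + 2 * X +
          ((L : ℤ[X]) + 1 - (altRuns (L + 2) σ : ℤ[X])) * X ^ 2) := by
  have hword (p : Fin (L + 3)) : numChanges (ascentWord (insertMax σ p)) (L + 1) =
      numChanges (insertPeak (ascentWord σ) p) (L + 1) :=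
    numChanges_congr _ fun i hi => ascentWord_insertMax σ p (by omega)
  simp only [altRuns_eq, hword, pow_add, ← mul_sum]
  rw [Fin.sum_univ_eq_sum_range
      (fun q => (X : ℤ[X]) ^ numChanges (insertPeak (ascentWord σ) q) (L + 1)),
    sum_X_pow_numChanges_insertPeak]
  push_cast
  ring

theorem Rpoly_add_three (L : ℕ) :
    Rpoly (L + 3) = runsOperator ((L : ℤ[X]) + 1) (Rpoly (L + 2)) := by
  have hsplit : Rpoly (L + 3) = ∑ σ : Equiv.Perm (Fin (L + 2)), ∑ p : Fin (L + 3),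
      X ^ altRuns (L + 3) (insertMax σ p) := by
    rw [Rpoly,
      ← Fintype.sum_prod_type' (fun σ p => (X : ℤ[X]) ^ altRuns (L + 3) (insertMax σ p))]
    exact (Fintype.sum_bijective _ insertMax_bijective _ _ fun _ => rfl).symm
  rw [hsplit, runsOperator, Rpoly, derivative_sum, mul_sum, mul_sum, ← sum_add_distrib]
  refine sum_congr rfl fun σ _ => ?_
  rw [sum_X_pow_altRuns_insertMax, mul_assoc, mul_left_comm, X_mul_derivative_X_pow]
  ring


/-- For `n ≥ 2`, `(x+1)^{⌊n/2⌋-1}` divides `R_n(x)` in `ℤ[x]`. -/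
theorem stmt4 (n : ℕ) (hn : 2 ≤ n) :
    (Polynomial.X + 1) ^ (n / 2 - 1) ∣ Rpoly n := by
  induction n, hn using Nat.le_induction with
  | base => simp
  | succ n hn ih =>
    obtain ⟨L, rfl⟩ := Nat.exists_eq_add_of_le' hn
    rw [Rpoly_add_three]
    obtain ⟨k, rfl | rfl⟩ := Nat.even_or_odd' L
    · rw [show (2 * k + 2 + 1) / 2 - 1 = (2 * k + 2) / 2 - 1 by omega]
      exact X_add_one_pow_dvd_runsOperator _ ih
    · rw [show (2 * k + 1 + 2) / 2 - 1 = k by omega] at ih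
      rw [show (2 * k + 1 + 2 + 1) / 2 - 1 = k + 1 by omega]
      convert X_add_one_pow_succ_dvd_runsOperator ih using 2
      push_cast
      ring
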